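/- Let Y be a Tychonoff space and X ⊆ Y a subspace. The following are equivalent: (i) there exists a lower semicontinuous compact-valued set-valued map r : Y → βX with r(x) = {η(x)} for all x ∈ X; (ii) there exists an extender u : C*(X) → C*_usc(Y) which is normed, weakly additive, preserves min and weakly preserves max; (iii) there exists an extender u : C*(X) → C*_lsc(Y) which is normed, weakly additive, preserves max and weakly preserves min. -/

import Mathlib

/-
An lsc compact-valued `r` yields the extender `u f y = inf (βf '' r y)`, where `βf` is the
extension of `f` to `βX`: lower semicontinuity of `r` makes `u f` upper semicontinuous, and the
infimum over a fixed set commutes with `min`, with `max` against constants and with adding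
constants. Conversely, an extender `u` as in (ii) gives `r y = {p | ∀ g, u g y ≤ βg p}`. If
`u f y < c`, a lattice computation with `u · y` shows that the closed sets
`{βf ≤ c} ∩ {βg ≥ 0}`, `u g y > 0`, are nonempty and directed, so by compactness of `βX` some
point of `r y` has `βf ≤ c`. With Urysohn's lemma on `βX` this gives lower semicontinuity of `r`
and `r x = {η x}`. Finally `u ↦ (f ↦ -u (-f))` exchanges (ii) and (iii).
-/

open Set BoundedContinuousFunction

namespace BoundedContinuousFunction

variable {α : Type*} [TopologicalSpace α]

theorem neg_add_const (f : α →ᵇ ℝ) (c : ℝ) : -(f + const α c) = -f + const α (-c) := by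
  ext; simp [add_comm]

theorem neg_sup_const (f : α →ᵇ ℝ) (c : ℝ) : -(f ⊔ const α c) = -f ⊓ const α (-c) := by
  ext; simp [neg_sup]

theorem neg_inf_const (f : α →ᵇ ℝ) (c : ℝ) : -(f ⊓ const α c) = -f ⊔ const α (-c) := by
  ext; simp [neg_inf]

theorem neg_one_eq_one_add_const : -(1 : α →ᵇ ℝ) = 1 + const α (-2) := by
  ext; norm_num

-- `_root_.stoneCechExtend` needs a compact codomain, hence the detour through `[-‖f‖, ‖f‖]`.
noncomputable def stoneCechExtend (f : α →ᵇ ℝ) : StoneCech α → ℝ :=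
  Subtype.val ∘ _root_.stoneCechExtend (β := Icc (-‖f‖) ‖f‖)
    (g := fun x => ⟨f x, abs_le.mp (f.norm_coe_le_norm x)⟩) (f.continuous.subtype_mk _)

variable (f g : α →ᵇ ℝ)

@[fun_prop]
theorem continuous_stoneCechExtend : Continuous f.stoneCechExtend :=
  continuous_subtype_val.comp (_root_.continuous_stoneCechExtend _)

@[simp]
theorem stoneCechExtend_stoneCechUnit (x : α) : f.stoneCechExtend (stoneCechUnit x) = f x := by
  simp [stoneCechExtend]

theorem abs_stoneCechExtend_le (p : StoneCech α) : |f.stoneCechExtend p| ≤ ‖f‖ :=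
  abs_le.mpr (Subtype.prop (_root_.stoneCechExtend (β := Icc (-‖f‖) ‖f‖) _ p))

theorem stoneCechExtend_eq {G : StoneCech α → ℝ} (hG : Continuous G)
    (h : ∀ x, G (stoneCechUnit x) = f x) : f.stoneCechExtend = G :=
  stoneCech_hom_ext (by fun_prop) hG (funext fun x => by simp [h])

theorem stoneCechExtend_const (c : ℝ) : (const α c).stoneCechExtend = fun _ => c :=
  stoneCechExtend_eq _ continuous_const fun _ => rfl

theorem stoneCechExtend_add : (f + g).stoneCechExtend = f.stoneCechExtend + g.stoneCechExtend :=
  stoneCechExtend_eq _ (by fun_prop) fun _ => by simp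

theorem stoneCechExtend_inf : (f ⊓ g).stoneCechExtend = f.stoneCechExtend ⊓ g.stoneCechExtend :=
  stoneCechExtend_eq _ (by fun_prop) fun _ => by simp

theorem stoneCechExtend_sup : (f ⊔ g).stoneCechExtend = f.stoneCechExtend ⊔ g.stoneCechExtend :=
  stoneCechExtend_eq _ (by fun_prop) fun _ => by simp

theorem exists_stoneCechExtend_eq_zero_of_notMem {K : Set (StoneCech α)} (hK : IsClosed K)
    {p : StoneCech α} (hp : p ∉ K) :
    ∃ f : α →ᵇ ℝ, f.stoneCechExtend p = 0 ∧ ∀ q ∈ K, f.stoneCechExtend q = 1 := by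
  obtain ⟨G, hGp, hGK, -⟩ := exists_continuous_zero_one_of_isClosed isClosed_singleton hK
    (disjoint_singleton_left.mpr hp)
  let f : α →ᵇ ℝ := (mkOfCompact G).compContinuous ⟨stoneCechUnit, continuous_stoneCechUnit⟩
  have hf : f.stoneCechExtend = G := stoneCechExtend_eq f G.continuous fun _ => rfl
  exact ⟨f, by simpa [hf] using hGp rfl, fun q hq => by simpa [hf] using hGK hq⟩

theorem bddBelow_stoneCechExtend_image (f : α →ᵇ ℝ) (K : Set (StoneCech α)) :
    BddBelow (f.stoneCechExtend '' K) :=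
  ⟨-‖f‖, forall_mem_image.mpr fun p _ => (abs_le.mp (f.abs_stoneCechExtend_le p)).1⟩

theorem abs_sInf_stoneCechExtend_image_le (f : α →ᵇ ℝ) {K : Set (StoneCech α)}
    (hK : K.Nonempty) :
    |sInf (f.stoneCechExtend '' K)| ≤ ‖f‖ := by
  obtain ⟨p, hp⟩ := hK
  refine abs_le.mpr ⟨le_csInf ⟨_, mem_image_of_mem _ hp⟩ (forall_mem_image.mpr fun q _ =>
    (abs_le.mp (f.abs_stoneCechExtend_le q)).1), ?_⟩
  exact (csInf_le (f.bddBelow_stoneCechExtend_image K) (mem_image_of_mem _ hp)).trans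
    (abs_le.mp (f.abs_stoneCechExtend_le p)).2

end BoundedContinuousFunction

section MinFunctional

variable {α : Type*} [TopologicalSpace α]

structure IsMinFunctional (φ : (α →ᵇ ℝ) → ℝ) : Prop where
  map_one : φ 1 = 1
  map_add_const (f : α →ᵇ ℝ) (c : ℝ) : φ (f + const α c) = φ f + c
  map_inf (f g : α →ᵇ ℝ) : φ (f ⊓ g) = min (φ f) (φ g)
  map_sup_const (f : α →ᵇ ℝ) (c : ℝ) : φ (f ⊔ const α c) = max (φ f) c

def stoneCechSupport (φ : (α →ᵇ ℝ) → ℝ) : Set (StoneCech α) :=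
  {p | ∀ g : α →ᵇ ℝ, φ g ≤ g.stoneCechExtend p}

theorem isClosed_stoneCechSupport (φ : (α →ᵇ ℝ) → ℝ) : IsClosed (stoneCechSupport φ) := by
  simp only [stoneCechSupport, ofPred_forall]
  exact isClosed_iInter fun g => isClosed_le continuous_const g.continuous_stoneCechExtend

theorem stoneCechSupport_eval (x : α) :
    stoneCechSupport (fun f : α →ᵇ ℝ => f x) = {stoneCechUnit x} := by
  refine Subset.antisymm (fun p hp => ?_) ?_
  · by_contra hpx
    obtain ⟨f, hfp, hfx⟩ := exists_stoneCechExtend_eq_zero_of_notMem isClosed_singleton hpx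
    have : f x ≤ 0 := hfp ▸ hp f
    rw [← f.stoneCechExtend_stoneCechUnit, hfx _ rfl] at this
    norm_num at this
  · rintro _ rfl g
    simp

theorem isMinFunctional_sInf_image {K : Set (StoneCech α)} (hK : K.Nonempty) :
    IsMinFunctional fun f : α →ᵇ ℝ => sInf (f.stoneCechExtend '' K) := by
  have inf_le (f : α →ᵇ ℝ) {p} (hp : p ∈ K) :
      sInf (f.stoneCechExtend '' K) ≤ f.stoneCechExtend p :=
    csInf_le (f.bddBelow_stoneCechExtend_image K) (mem_image_of_mem _ hp)
  have map_mono (f : α →ᵇ ℝ) {h : ℝ → ℝ} (hc : Continuous h) (hm : Monotone h) :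
      sInf ((h ∘ f.stoneCechExtend) '' K) = h (sInf (f.stoneCechExtend '' K)) := by
    rw [image_comp, hm.map_csInf_of_continuousAt hc.continuousAt (hK.image _)
      (f.bddBelow_stoneCechExtend_image K)]
  refine ⟨?_, fun f c => ?_, fun f g => ?_, fun f c => ?_⟩
  · change sInf ((const α 1).stoneCechExtend '' K) = 1
    simp [stoneCechExtend_const, hK.image_const]
  · simpa [stoneCechExtend_add, stoneCechExtend_const] using
      map_mono f (continuous_add_const c) (monotone_id.add_const c)
  · have inf_apply (p) : (f ⊓ g).stoneCechExtend p =
        min (f.stoneCechExtend p) (g.stoneCechExtend p) := by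
      rw [stoneCechExtend_inf]; rfl
    refine le_antisymm (le_min ?_ ?_)
      (le_csInf (hK.image _) (forall_mem_image.mpr fun p hp => ?_))
    · exact le_csInf (hK.image _) (forall_mem_image.mpr fun p hp =>
        (inf_le _ hp).trans (inf_apply p ▸ min_le_left _ _))
    · exact le_csInf (hK.image _) (forall_mem_image.mpr fun p hp =>
        (inf_le _ hp).trans (inf_apply p ▸ min_le_right _ _))
    · exact inf_apply p ▸ min_le_min (inf_le f hp) (inf_le g hp)
  · simpa [stoneCechExtend_sup, stoneCechExtend_const] using
      map_mono f (continuous_id.max continuous_const) (fun _ _ h => max_le_max h le_rfl)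

end MinFunctional

namespace IsMinFunctional

variable {α : Type*} [TopologicalSpace α] {φ : (α →ᵇ ℝ) → ℝ}

theorem map_const (hφ : IsMinFunctional φ) (c : ℝ) : φ (const α c) = c := by
  have : const α c = 1 + const α (c - 1) := by ext; simp
  rw [this, hφ.map_add_const, hφ.map_one]
  ring

theorem monotone (hφ : IsMinFunctional φ) : Monotone φ := fun f g hfg => by
  rw [← inf_eq_left.mpr hfg, hφ.map_inf]
  exact min_le_right _ _

/-- Comparing `k = clamp(g, 0, δ) + φ f` with `h = clamp(f, φ f, φ f + δ)`: if `g < 0` wherever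
`f ≤ c`, then `k ≤ h`, while `φ k = φ f + δ > φ f = φ h`. -/
theorem exists_le_and_nonneg (hφ : IsMinFunctional φ) {f g : α →ᵇ ℝ} {c : ℝ} (hf : φ f < c)
    (hg : 0 < φ g) :
    ∃ x, f x ≤ c ∧ 0 ≤ g x := by
  by_contra! hfg
  set a := φ f
  set δ := min (c - a) (φ g)
  have hδ : 0 < δ := lt_min (sub_pos.mpr hf) hg
  have hδc : a + δ ≤ c := by linarith [min_le_left (c - a) (φ g)]
  have hk : φ ((g ⊔ const α 0) ⊓ const α δ + const α a) = δ + a := by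
    rw [hφ.map_add_const, hφ.map_inf, hφ.map_sup_const, hφ.map_const,
      max_eq_left hg.le, min_eq_right (min_le_right _ _)]
  have hh : φ ((f ⊔ const α a) ⊓ const α (a + δ)) = a := by
    rw [hφ.map_inf, hφ.map_sup_const, hφ.map_const, max_self, min_eq_left (by linarith)]
  have hkh : (g ⊔ const α 0) ⊓ const α δ + const α a ≤ (f ⊔ const α a) ⊓ const α (a + δ) := by
    intro x
    change min (max (g x) 0) δ + a ≤ min (max (f x) a) (a + δ)
    rcases le_or_gt (f x) c with hx | hx
    · rw [max_eq_right (hfg x hx).le, min_eq_left hδ.le, zero_add]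
      exact le_min (le_max_right _ _) (by linarith)
    · rw [max_eq_left (show a ≤ f x by linarith), min_eq_right (show a + δ ≤ f x by linarith)]
      linarith [min_le_right (max (g x) 0) δ]
  linarith [hφ.monotone hkh]

/-- The closed sets `{βf ≤ c} ∩ {βg ≥ 0}` with `φ g > 0` are nonempty by `exists_le_and_nonneg`
and directed since `g ⊓ g'` refines `g` and `g'`. A common point `p` lies in the support: testing
it against `g + (ε - φ g)` gives `φ g ≤ βg p + ε` for all `ε > 0`. -/
theorem exists_mem_stoneCechSupport_le (hφ : IsMinFunctional φ) {f : α →ᵇ ℝ} {c : ℝ}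
    (hf : φ f < c) :
    ∃ p ∈ stoneCechSupport φ, f.stoneCechExtend p ≤ c := by
  let C : {g : α →ᵇ ℝ // 0 < φ g} → Set (StoneCech α) :=
    fun g => {p | f.stoneCechExtend p ≤ c ∧ 0 ≤ g.1.stoneCechExtend p}
  have hC_closed (g) : IsClosed (C g) :=
    (isClosed_le f.continuous_stoneCechExtend continuous_const).inter
      (isClosed_le continuous_const g.1.continuous_stoneCechExtend)
  have hC_nonempty (g) : (C g).Nonempty := by
    obtain ⟨x, hfx, hgx⟩ := hφ.exists_le_and_nonneg hf g.2
    exact ⟨stoneCechUnit x, by simpa using hfx, by simpa using hgx⟩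
  have hC_directed : Directed (· ⊇ ·) C := fun g g' => by
    refine ⟨⟨g.1 ⊓ g'.1, by rw [hφ.map_inf]; exact lt_min g.2 g'.2⟩, ?_, ?_⟩ <;>
    · rintro p ⟨hfp, hp⟩
      rw [stoneCechExtend_inf] at hp
      exact ⟨hfp, by simp_all⟩
  have : Nonempty {g : α →ᵇ ℝ // 0 < φ g} := ⟨⟨1, by rw [hφ.map_one]; exact one_pos⟩⟩
  obtain ⟨p, hp⟩ := IsCompact.nonempty_iInter_of_directed_nonempty_isCompact_isClosed C
    hC_directed hC_nonempty (fun g => (hC_closed g).isCompact) hC_closed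
  rw [mem_iInter] at hp
  refine ⟨p, fun g => le_of_forall_pos_le_add fun ε hε => ?_, (hp this.some).1⟩
  have := (hp ⟨g + const α (ε - φ g), by rw [hφ.map_add_const]; linarith⟩).2
  rw [stoneCechExtend_add, stoneCechExtend_const] at this
  simp only [Pi.add_apply] at this
  linarith

theorem exists_mem_stoneCechSupport_lt (hφ : IsMinFunctional φ) {f : α →ᵇ ℝ} {c : ℝ}
    (hf : φ f < c) :
    ∃ p ∈ stoneCechSupport φ, f.stoneCechExtend p < c := by
  obtain ⟨c', hfc', hc'⟩ := exists_between hf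
  obtain ⟨p, hp, hfp⟩ := hφ.exists_mem_stoneCechSupport_le hfc'
  exact ⟨p, hp, hfp.trans_lt hc'⟩

theorem stoneCechSupport_nonempty (hφ : IsMinFunctional φ) : (stoneCechSupport φ).Nonempty :=
  let ⟨p, hp, _⟩ := hφ.exists_mem_stoneCechSupport_lt (f := const α 0) (c := 1)
    (by rw [hφ.map_const]; exact one_pos)
  ⟨p, hp⟩

end IsMinFunctional

section Extenders

variable {Y : Type*} [TopologicalSpace Y] {X : Set Y}

variable (X) in
def IsCompactLSCExtension (r : Y → Set (StoneCech X)) : Prop :=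
  (∀ y, (r y).Nonempty ∧ IsCompact (r y)) ∧
  (∀ U : Set (StoneCech X), IsOpen U → IsOpen {y | (r y ∩ U).Nonempty}) ∧
  (∀ x : X, r x = {stoneCechUnit x})

variable (X) in
def IsUSCMinExtender (u : (X →ᵇ ℝ) → Y → ℝ) : Prop :=
  (∀ f, UpperSemicontinuous (u f)) ∧
  (∀ f, ∃ M : ℝ, ∀ y, |u f y| ≤ M) ∧
  (∀ (f : X →ᵇ ℝ) (x : X), u f x = f x) ∧
  (∀ y, u 1 y = 1) ∧
  (∀ (f : X →ᵇ ℝ) (c : ℝ) (y : Y), u (f + const X c) y = u f y + c) ∧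
  (∀ (f g : X →ᵇ ℝ) (y : Y), u (f ⊓ g) y = min (u f y) (u g y)) ∧
  (∀ (f : X →ᵇ ℝ) (c : ℝ) (y : Y), u (f ⊔ const X c) y = max (u f y) c)

variable (X) in
def IsLSCMaxExtender (u : (X →ᵇ ℝ) → Y → ℝ) : Prop :=
  (∀ f, LowerSemicontinuous (u f)) ∧
  (∀ f, ∃ M : ℝ, ∀ y, |u f y| ≤ M) ∧
  (∀ (f : X →ᵇ ℝ) (x : X), u f x = f x) ∧
  (∀ y, u 1 y = 1) ∧
  (∀ (f : X →ᵇ ℝ) (c : ℝ) (y : Y), u (f + const X c) y = u f y + c) ∧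
  (∀ (f g : X →ᵇ ℝ) (y : Y), u (f ⊔ g) y = max (u f y) (u g y)) ∧
  (∀ (f : X →ᵇ ℝ) (c : ℝ) (y : Y), u (f ⊓ const X c) y = min (u f y) c)

theorem IsCompactLSCExtension.isUSCMinExtender {r : Y → Set (StoneCech X)}
    (hr : IsCompactLSCExtension X r) :
    IsUSCMinExtender X fun f y => sInf (f.stoneCechExtend '' r y) := by
  obtain ⟨hne, hlsc, hx⟩ := hr
  have hφ (y : Y) := isMinFunctional_sInf_image (hne y).1
  refine ⟨fun f y c hc => ?_,
    fun f => ⟨‖f‖, fun y => f.abs_sInf_stoneCechExtend_image_le (hne y).1⟩,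
    fun f x => by simp [hx x], fun y => (hφ y).map_one, fun f c y => (hφ y).map_add_const f c,
    fun f g y => (hφ y).map_inf f g, fun f c y => (hφ y).map_sup_const f c⟩
  obtain ⟨_, ⟨p, hp, rfl⟩, hpc⟩ := exists_lt_of_csInf_lt ((hne y).1.image _) hc
  have hU := hlsc {q | f.stoneCechExtend q < c}
    (isOpen_lt f.continuous_stoneCechExtend continuous_const)
  filter_upwards [hU.mem_nhds ⟨p, hp, hpc⟩] with y ⟨q, hq, hqc⟩
  exact (csInf_le (f.bddBelow_stoneCechExtend_image _) (mem_image_of_mem _ hq)).trans_lt hqc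

theorem IsUSCMinExtender.isMinFunctional {u : (X →ᵇ ℝ) → Y → ℝ} (hu : IsUSCMinExtender X u)
    (y : Y) : IsMinFunctional (u · y) :=
  let ⟨_, _, _, hone, hadd, hinf, hsup⟩ := hu
  ⟨hone y, (hadd · · y), (hinf · · y), (hsup · · y)⟩

theorem IsUSCMinExtender.isCompactLSCExtension {u : (X →ᵇ ℝ) → Y → ℝ}
    (hu : IsUSCMinExtender X u) : IsCompactLSCExtension X fun y => stoneCechSupport (u · y) := by
  have hφ := hu.isMinFunctional
  obtain ⟨husc, -, hext, -⟩ := hu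
  refine ⟨fun y => ⟨(hφ y).stoneCechSupport_nonempty, (isClosed_stoneCechSupport _).isCompact⟩,
    fun U hU => isOpen_iff_mem_nhds.mpr ?_, fun x => ?_⟩
  · rintro y₀ ⟨p, hp, hpU⟩
    obtain ⟨f, hfp, hfU⟩ :=
      exists_stoneCechExtend_eq_zero_of_notMem hU.isClosed_compl (not_not.mpr hpU)
    have hfy₀ : u f y₀ < 1 := (hp f).trans_lt (hfp ▸ one_pos)
    filter_upwards [husc f y₀ 1 hfy₀] with y hy
    obtain ⟨q, hq, hfq⟩ := (hφ y).exists_mem_stoneCechSupport_lt hy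
    exact ⟨q, hq, not_not.mp fun hqU => hfq.ne (hfU q hqU)⟩
  · have : (u · x) = fun f => f x := funext fun f => hext f x
    simp only [this, stoneCechSupport_eval]

theorem exists_isCompactLSCExtension_iff_exists_isUSCMinExtender :
    (∃ r, IsCompactLSCExtension X r) ↔ ∃ u, IsUSCMinExtender X u :=
  ⟨fun ⟨_, hr⟩ => ⟨_, hr.isUSCMinExtender⟩, fun ⟨_, hu⟩ => ⟨_, hu.isCompactLSCExtension⟩⟩

theorem IsUSCMinExtender.isLSCMaxExtender_neg {u : (X →ᵇ ℝ) → Y → ℝ}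
    (hu : IsUSCMinExtender X u) : IsLSCMaxExtender X fun f => -u (-f) := by
  obtain ⟨husc, hbd, hext, hone, hadd, hinf, hsup⟩ := hu
  refine ⟨fun f => (husc (-f)).neg, fun f => ?_, fun f x => by simp [hext],
    fun y => by simp only [Pi.neg_apply, neg_one_eq_one_add_const, hadd, hone]; norm_num,
    fun f c y => by simp only [Pi.neg_apply, neg_add_const, hadd]; ring,
    fun f g y => by simp only [Pi.neg_apply, neg_sup, hinf, max_neg_neg],
    fun f c y => by simp only [Pi.neg_apply, neg_inf_const, hsup]; rw [← min_neg_neg, neg_neg]⟩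
  obtain ⟨M, hM⟩ := hbd (-f)
  exact ⟨M, fun y => by simpa using hM y⟩

theorem IsLSCMaxExtender.isUSCMinExtender_neg {u : (X →ᵇ ℝ) → Y → ℝ}
    (hu : IsLSCMaxExtender X u) : IsUSCMinExtender X fun f => -u (-f) := by
  obtain ⟨hlsc, hbd, hext, hone, hadd, hsup, hinf⟩ := hu
  refine ⟨fun f => (hlsc (-f)).neg, fun f => ?_, fun f x => by simp [hext],
    fun y => by simp only [Pi.neg_apply, neg_one_eq_one_add_const, hadd, hone]; norm_num,
    fun f c y => by simp only [Pi.neg_apply, neg_add_const, hadd]; ring,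
    fun f g y => by simp only [Pi.neg_apply, neg_inf, hsup, min_neg_neg],
    fun f c y => by simp only [Pi.neg_apply, neg_sup_const, hinf]; rw [← max_neg_neg, neg_neg]⟩
  obtain ⟨M, hM⟩ := hbd (-f)
  exact ⟨M, fun y => by simpa using hM y⟩

theorem exists_isUSCMinExtender_iff_exists_isLSCMaxExtender :
    (∃ u, IsUSCMinExtender X u) ↔ ∃ u, IsLSCMaxExtender X u :=
  ⟨fun ⟨_, hu⟩ => ⟨_, hu.isLSCMaxExtender_neg⟩, fun ⟨_, hu⟩ => ⟨_, hu.isUSCMinExtender_neg⟩⟩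

end Extenders

theorem statement18_general {Y : Type*} [TopologicalSpace Y] (X : Set Y) :
    ((∃ r : Y → Set (StoneCech X),
        (∀ y, (r y).Nonempty ∧ IsCompact (r y)) ∧
        (∀ U : Set (StoneCech X), IsOpen U → IsOpen {y | (r y ∩ U).Nonempty}) ∧
        (∀ x : X, r x = {stoneCechUnit x})) ↔
      (∃ u : BoundedContinuousFunction X ℝ → Y → ℝ,
        (∀ f, UpperSemicontinuous (u f)) ∧
        (∀ f, ∃ M : ℝ, ∀ y, |u f y| ≤ M) ∧
        (∀ (f : BoundedContinuousFunction X ℝ) (x : X), u f x = f x) ∧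
        (∀ y, u 1 y = 1) ∧
        (∀ (f : BoundedContinuousFunction X ℝ) (c : ℝ) (y : Y),
          u (f + BoundedContinuousFunction.const X c) y = u f y + c) ∧
        (∀ (f g : BoundedContinuousFunction X ℝ) (y : Y),
          u (f ⊓ g) y = min (u f y) (u g y)) ∧
        (∀ (f : BoundedContinuousFunction X ℝ) (c : ℝ) (y : Y),
          u (f ⊔ BoundedContinuousFunction.const X c) y = max (u f y) c))) ∧
    ((∃ r : Y → Set (StoneCech X),
        (∀ y, (r y).Nonempty ∧ IsCompact (r y)) ∧
        (∀ U : Set (StoneCech X), IsOpen U → IsOpen {y | (r y ∩ U).Nonempty}) ∧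
        (∀ x : X, r x = {stoneCechUnit x})) ↔
      (∃ u : BoundedContinuousFunction X ℝ → Y → ℝ,
        (∀ f, LowerSemicontinuous (u f)) ∧
        (∀ f, ∃ M : ℝ, ∀ y, |u f y| ≤ M) ∧
        (∀ (f : BoundedContinuousFunction X ℝ) (x : X), u f x = f x) ∧
        (∀ y, u 1 y = 1) ∧
        (∀ (f : BoundedContinuousFunction X ℝ) (c : ℝ) (y : Y),
          u (f + BoundedContinuousFunction.const X c) y = u f y + c) ∧
        (∀ (f g : BoundedContinuousFunction X ℝ) (y : Y),
          u (f ⊔ g) y = max (u f y) (u g y)) ∧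
        (∀ (f : BoundedContinuousFunction X ℝ) (c : ℝ) (y : Y),
          u (f ⊓ BoundedContinuousFunction.const X c) y = min (u f y) c))) :=
  ⟨exists_isCompactLSCExtension_iff_exists_isUSCMinExtender,
    exists_isCompactLSCExtension_iff_exists_isUSCMinExtender.trans
      exists_isUSCMinExtender_iff_exists_isLSCMaxExtender⟩

/-- for a subspace `X ⊆ Y`, the following are equivalent: (i) there is a lower
semicontinuous compact-valued map `r : Y → βX` with `r x = {η x}` for `x ∈ X`; (ii) there is a
normed, weakly additive extender `u : C*(X) → C*_usc(Y)` preserving min and weakly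
preserving max; (iii) there is a normed, weakly additive extender `u : C*(X) → C*_lsc(Y)`
preserving max and weakly preserving min. -/
theorem statement18 {Y : Type*} [TopologicalSpace Y] [T35Space Y] (X : Set Y) :
    ((∃ r : Y → Set (StoneCech X),
        (∀ y, (r y).Nonempty ∧ IsCompact (r y)) ∧
        (∀ U : Set (StoneCech X), IsOpen U → IsOpen {y | (r y ∩ U).Nonempty}) ∧
        (∀ x : X, r x = {stoneCechUnit x})) ↔
      (∃ u : BoundedContinuousFunction X ℝ → Y → ℝ,
        (∀ f, UpperSemicontinuous (u f)) ∧
        (∀ f, ∃ M : ℝ, ∀ y, |u f y| ≤ M) ∧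
        (∀ (f : BoundedContinuousFunction X ℝ) (x : X), u f x = f x) ∧
        (∀ y, u 1 y = 1) ∧
        (∀ (f : BoundedContinuousFunction X ℝ) (c : ℝ) (y : Y),
          u (f + BoundedContinuousFunction.const X c) y = u f y + c) ∧
        (∀ (f g : BoundedContinuousFunction X ℝ) (y : Y),
          u (f ⊓ g) y = min (u f y) (u g y)) ∧
        (∀ (f : BoundedContinuousFunction X ℝ) (c : ℝ) (y : Y),
          u (f ⊔ BoundedContinuousFunction.const X c) y = max (u f y) c))) ∧
    ((∃ r : Y → Set (StoneCech X),
        (∀ y, (r y).Nonempty ∧ IsCompact (r y)) ∧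
        (∀ U : Set (StoneCech X), IsOpen U → IsOpen {y | (r y ∩ U).Nonempty}) ∧
        (∀ x : X, r x = {stoneCechUnit x})) ↔
      (∃ u : BoundedContinuousFunction X ℝ → Y → ℝ,
        (∀ f, LowerSemicontinuous (u f)) ∧
        (∀ f, ∃ M : ℝ, ∀ y, |u f y| ≤ M) ∧
        (∀ (f : BoundedContinuousFunction X ℝ) (x : X), u f x = f x) ∧
        (∀ y, u 1 y = 1) ∧
        (∀ (f : BoundedContinuousFunction X ℝ) (c : ℝ) (y : Y),
          u (f + BoundedContinuousFunction.const X c) y = u f y + c) ∧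
        (∀ (f g : BoundedContinuousFunction X ℝ) (y : Y),
          u (f ⊔ g) y = max (u f y) (u g y)) ∧
        (∀ (f : BoundedContinuousFunction X ℝ) (c : ℝ) (y : Y),
          u (f ⊓ BoundedContinuousFunction.const X c) y = min (u f y) c))) :=
  statement18_general X
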